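/- arXiv:0812.4807 — 7 statements merged into one kernel-verified Lean document; each statement's English description precedes it below -/
import Mathlib

section
/- Over the field k(x_1,x_2,x_3,x_4) with indeterminates x_i, if s_1^3 - 4 s_1 s_2 + 8 s_3 ≠ 0, then x_1 = (s_1^2 s_2 - 4 s_2^2 + 4 s_1 s_3 - s_1^2 θ + 4θ^2 + (s_1^3 - 4 s_1 s_2 + 8 s_3) z_1 + (s_1^2 - 4 s_2 + 4θ) z_1^2) / (2(s_1^3 - 4 s_1 s_2 + 8 s_3)), where θ = x_1 x_3 + x_2 x_4 and z_1 = x_1 - x_3. -/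
open MvPolynomial

/-- The image of the indeterminate `xᵢ` in the rational function field `k(x₁,…,x₄)`. -/
noncomputable def xv (k : Type*) [Field k] (i : Fin 4) :
    FractionRing (MvPolynomial (Fin 4) k) :=
  algebraMap (MvPolynomial (Fin 4) k) (FractionRing (MvPolynomial (Fin 4) k)) (X i)

theorem two_mul_mul_eq_of_elementary_symmetric {R : Type*} [CommRing R] (x₁ x₂ x₃ x₄ : R)
    {s₁ s₂ s₃ θ z : R}
    (hs₁ : s₁ = x₁ + x₂ + x₃ + x₄)
    (hs₂ : s₂ = x₁ * x₂ + x₁ * x₃ + x₁ * x₄ + x₂ * x₃ + x₂ * x₄ + x₃ * x₄)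
    (hs₃ : s₃ = x₁ * x₂ * x₃ + x₁ * x₂ * x₄ + x₁ * x₃ * x₄ + x₂ * x₃ * x₄)
    (hθ : θ = x₁ * x₃ + x₂ * x₄) (hz : z = x₁ - x₃) :
    2 * (s₁ ^ 3 - 4 * s₁ * s₂ + 8 * s₃) * x₁ =
      s₁ ^ 2 * s₂ - 4 * s₂ ^ 2 + 4 * s₁ * s₃ - s₁ ^ 2 * θ + 4 * θ ^ 2
        + (s₁ ^ 3 - 4 * s₁ * s₂ + 8 * s₃) * z + (s₁ ^ 2 - 4 * s₂ + 4 * θ) * z ^ 2 := by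
  subst hs₁ hs₂ hs₃ hθ hz
  ring

/-- In `k(x₁,…,x₄)` with char `k ≠ 2`, if `s₁³ - 4s₁s₂ + 8s₃ ≠ 0` then
`x₁ = (s₁²s₂ - 4s₂² + 4s₁s₃ - s₁²θ + 4θ² + (s₁³-4s₁s₂+8s₃)z₁ + (s₁²-4s₂+4θ)z₁²)
      / (2(s₁³-4s₁s₂+8s₃))`,
where `θ = x₁x₃ + x₂x₄` and `z₁ = x₁ - x₃`. -/
theorem x1_formula {k : Type*} [Field k] (h2 : (2 : k) ≠ 0)
    (s1 s2 s3 θ z1 : FractionRing (MvPolynomial (Fin 4) k))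
    (hs1 : s1 = xv k 0 + xv k 1 + xv k 2 + xv k 3)
    (hs2 : s2 = xv k 0 * xv k 1 + xv k 0 * xv k 2 + xv k 0 * xv k 3
      + xv k 1 * xv k 2 + xv k 1 * xv k 3 + xv k 2 * xv k 3)
    (hs3 : s3 = xv k 0 * xv k 1 * xv k 2 + xv k 0 * xv k 1 * xv k 3
      + xv k 0 * xv k 2 * xv k 3 + xv k 1 * xv k 2 * xv k 3)
    (hθ : θ = xv k 0 * xv k 2 + xv k 1 * xv k 3)
    (hz : z1 = xv k 0 - xv k 2)
    (hd : s1 ^ 3 - 4 * s1 * s2 + 8 * s3 ≠ 0) :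
    xv k 0 = (s1 ^ 2 * s2 - 4 * s2 ^ 2 + 4 * s1 * s3 - s1 ^ 2 * θ + 4 * θ ^ 2
        + (s1 ^ 3 - 4 * s1 * s2 + 8 * s3) * z1 + (s1 ^ 2 - 4 * s2 + 4 * θ) * z1 ^ 2)
      / (2 * (s1 ^ 3 - 4 * s1 * s2 + 8 * s3)) := by
  have h2' : (2 : FractionRing (MvPolynomial (Fin 4) k)) ≠ 0 := by
    simpa only [map_ofNat, map_zero] using (FaithfulSMul.algebraMap_injective k
      (FractionRing (MvPolynomial (Fin 4) k))).ne h2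
  rw [eq_div_iff (mul_ne_zero h2' hd), mul_comm]
  exact two_mul_mul_eq_of_elementary_symmetric _ _ _ _ hs1 hs2 hs3 hθ hz
end

section
/- The 5-th cyclotomic polynomial X^4 + X^3 + X^2 + X + 1 and the polynomial X^4 + 5X + 5 have the same splitting field over Q. -/
/-!
For a primitive fifth root of unity `ζ`, the element `η = ζ³ - ζ⁴` is a root of `X⁴ + 5X + 5`,
and writing `ζ` in the basis `1, η, η², η³` gives `ζ = (16 + 4η - 3η² + 5η³) / 11`. Conversely,
for every root `η` of `X⁴ + 5X + 5` this rational expression is a root `ζ` of `X⁴ + X³ + X² + X + 1`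
with `η = ζ³ - ζ⁴`. So each root of either polynomial is a rational polynomial in a root of the
other, and the two root sets generate the same field.
-/

open Polynomial

theorem IntermediateField.adjoin_le_adjoin_of_forall_exists_aeval {K L : Type*} [Field K]
    [Field L] [Algebra K L] {S T : Set L} (h : ∀ x ∈ S, ∃ y ∈ T, ∃ p : K[X], aeval y p = x) :
    adjoin K S ≤ adjoin K T := by
  refine adjoin_le_iff.2 fun x hx => ?_
  obtain ⟨y, hy, p, rfl⟩ := h x hx
  rw [← Subtype.coe_mk y (subset_adjoin K T hy), aeval_coe]
  exact SetLike.coe_mem _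

theorem monic_X_pow_four_add_X_pow_three_add_X_sq_add_X_add_one :
    (X ^ 4 + X ^ 3 + X ^ 2 + X + 1 : ℚ[X]).Monic := by
  monicity!

theorem monic_X_pow_four_add_five_mul_X_add_five : (X ^ 4 + 5 * X + 5 : ℚ[X]).Monic := by
  monicity!

section

variable {L : Type*} [Field L] [Algebra ℚ L]

theorem exists_root_quartic_aeval_eq_of_root_cyclotomic {x : L}
    (hx : x ∈ (X ^ 4 + X ^ 3 + X ^ 2 + X + 1 : ℚ[X]).rootSet L) :
    ∃ y ∈ (X ^ 4 + 5 * X + 5 : ℚ[X]).rootSet L, ∃ p : ℚ[X], aeval y p = x := by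
  rw [monic_X_pow_four_add_X_pow_three_add_X_sq_add_X_add_one.mem_rootSet] at hx
  simp only [map_add, map_pow, aeval_X, map_one] at hx
  have := algebraRat.charZero L
  refine ⟨x ^ 3 - x ^ 4, ?_, C 11⁻¹ * (16 + 4 * X - 3 * X ^ 2 + 5 * X ^ 3), ?_⟩
  · rw [monic_X_pow_four_add_five_mul_X_add_five.mem_rootSet]
    simp only [map_add, map_mul, map_pow, aeval_X, map_ofNat]
    linear_combination (5 - 5*x + 5*x^3 - 10*x^4 + 10*x^5 - 5*x^6 + 5*x^8
        - 10*x^9 + 10*x^10 - 5*x^11 + x^12) * hx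
  · simp only [map_mul, map_add, map_sub, map_pow, aeval_X, aeval_C, map_inv₀, map_ofNat]
    linear_combination (16 - 27*x + 11*x^2 + 4*x^3 - 8*x^4 + 20*x^5 - 30*x^6
        + 20*x^7 - 5*x^8) / 11 * hx

theorem exists_root_cyclotomic_aeval_eq_of_root_quartic {x : L}
    (hx : x ∈ (X ^ 4 + 5 * X + 5 : ℚ[X]).rootSet L) :
    ∃ y ∈ (X ^ 4 + X ^ 3 + X ^ 2 + X + 1 : ℚ[X]).rootSet L, ∃ p : ℚ[X], aeval y p = x := by
  rw [monic_X_pow_four_add_five_mul_X_add_five.mem_rootSet] at hx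
  simp only [map_add, map_mul, map_pow, aeval_X, map_ofNat] at hx
  have := algebraRat.charZero L
  refine ⟨(16 + 4 * x - 3 * x ^ 2 + 5 * x ^ 3) / 11, ?_, X ^ 3 - X ^ 4, ?_⟩
  · rw [monic_X_pow_four_add_X_pow_three_add_X_sq_add_X_add_one.mem_rootSet]
    simp only [map_add, map_pow, aeval_X, map_one]
    linear_combination (35501 - 11473*x + 444*x^2 + 20063*x^3 - 7859*x^4
        + 2110*x^5 + 3350*x^6 - 1500*x^7 + 625*x^8) / 14641 * hx
  · simp only [map_sub, map_pow, aeval_X]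
    linear_combination -(4096 + 5181*x - 6717*x^2 + 10493*x^3 - 2909*x^4
        - 640*x^5 + 3350*x^6 - 1500*x^7 + 625*x^8) / 14641 * hx

end

/-- The 5th cyclotomic polynomial `X^4+X^3+X^2+X+1` and `X^4+5X+5` have the same
splitting field over `ℚ` (inside a fixed algebraic closure). -/
theorem cyclotomic5_splitting_field :
    IntermediateField.adjoin ℚ
        ((X ^ 4 + X ^ 3 + X ^ 2 + X + 1 : ℚ[X]).rootSet (AlgebraicClosure ℚ)) =
      IntermediateField.adjoin ℚ
        ((X ^ 4 + 5 * X + 5 : ℚ[X]).rootSet (AlgebraicClosure ℚ)) :=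
  le_antisymm
    (IntermediateField.adjoin_le_adjoin_of_forall_exists_aeval fun _ =>
      exists_root_quartic_aeval_eq_of_root_cyclotomic)
    (IntermediateField.adjoin_le_adjoin_of_forall_exists_aeval fun _ =>
      exists_root_cyclotomic_aeval_eq_of_root_quartic)
end

section
/- Let M be a field of characteristic not 2 and a, b in M with b(a^2 - 4b) ≠ 0. The polynomial X^4 + aX^2 + b is reducible over M if and only if a^2 - 4b is a square in M, or -a + 2√b is a square in M for some square root √b of b in M, or -a - 2√b is a square in M for some square root √b of b in M. -/
/-!
A reducible monic quartic has a root or is a product of two monic quadratics. A root `x` of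
`X⁴ + aX² + b` gives `(2x² + a)² = a² - 4b`. Comparing coefficients in
`X⁴ + aX² + b = (X² + sX + t)(X² - sX + v)` gives `s(v - t) = 0`: either `s = 0`, and then
`t + v = a`, `tv = b` make `a² - 4b = (t - v)²`; or `t = v` is a square root of `b` and
`s² = 2t - a`. The alternative with `-a - 2√b` is the same one for the square root `-√b`.
-/

open Polynomial

namespace Polynomial

section CommRing

variable {R : Type*} [CommRing R]

lemma X_pow_four_add_eq_mul_quadratics_iff {a b s t u v : R} :
    X ^ 4 + C a * X ^ 2 + C b = (X ^ 2 + C s * X + C t) * (X ^ 2 + C u * X + C v) ↔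
      s + u = 0 ∧ t + v + s * u = a ∧ s * v + t * u = 0 ∧ t * v = b := by
  have hexpand : (X ^ 2 + C s * X + C t) * (X ^ 2 + C u * X + C v) =
      X ^ 4 + C (s + u) * X ^ 3 + C (t + v + s * u) * X ^ 2 + C (s * v + t * u) * X +
        C (t * v) := by
    simp only [map_add, map_mul]
    ring
  rw [hexpand]
  constructor
  · intro h
    have hcoeff (n : ℕ) := congrArg (coeff · n) h.symm
    simp only [coeff_add, coeff_C_mul, coeff_X_pow, coeff_X, coeff_C] at hcoeff
    exact ⟨by simpa using hcoeff 3, by simpa using hcoeff 2, by simpa using hcoeff 1,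
      by simpa using hcoeff 0⟩
  · rintro ⟨h3, h2, h1, h0⟩
    simp [h3, h2, h1, h0]

lemma sq_eq_of_isRoot_X_pow_four_add {a b x : R} (hx : (X ^ 4 + C a * X ^ 2 + C b).IsRoot x) :
    (2 * x ^ 2 + a) ^ 2 = a ^ 2 - 4 * b := by
  have hx : x ^ 4 + a * x ^ 2 + b = 0 := by simpa using hx
  linear_combination 4 * hx

variable [IsDomain R]

lemma not_irreducible_iff_exists_isRoot_or_eq_mul_quadratics {p : R[X]}
    (hp : IsMonicOfDegree p 4) :
    ¬Irreducible p ↔ (∃ x, p.IsRoot x) ∨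
      ∃ s t u v : R, p = (X ^ 2 + C s * X + C t) * (X ^ 2 + C u * X + C v) := by
  constructor
  · intro h
    rw [hp.monic.irreducible_iff_natDegree', hp.natDegree_eq] at h
    push Not at h
    obtain ⟨f, g, hf, hg, rfl, hmem⟩ := h fun h1 => by simpa [h1] using hp.natDegree_eq
    rw [Finset.mem_Ioc] at hmem
    have hdeg : f.natDegree + g.natDegree = 4 := hf.natDegree_mul hg ▸ hp.natDegree_eq
    obtain hg1 | hg2 : g.natDegree = 1 ∨ g.natDegree = 2 := by omega
    · obtain ⟨r, rfl⟩ := isMonicOfDegree_one_iff.mp ⟨hg1, hg⟩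
      exact .inl ⟨-r, by simp⟩
    · obtain ⟨s, t, rfl⟩ := isMonicOfDegree_two_iff.mp ⟨by omega, hf⟩
      obtain ⟨u, v, rfl⟩ := isMonicOfDegree_two_iff.mp ⟨hg2, hg⟩
      exact .inr ⟨s, t, u, v, rfl⟩
  · rintro (⟨x, hx⟩ | ⟨s, t, u, v, rfl⟩) hirr
    · have := degree_eq_one_of_irreducible_of_root hirr hx
      rw [degree_eq_natDegree hp.ne_zero, hp.natDegree_eq] at this
      norm_num at this
    · obtain h | h := hirr.isUnit_or_isUnit rfl <;>
        exact not_isUnit_of_natDegree_pos _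
          (by rw [(isMonicOfDegree_add_add_two _ _).natDegree_eq]; norm_num) h

lemma exists_sq_of_X_pow_four_add_eq_mul_quadratics {a b s t u v : R}
    (h : X ^ 4 + C a * X ^ 2 + C b = (X ^ 2 + C s * X + C t) * (X ^ 2 + C u * X + C v)) :
    (∃ m : R, m ^ 2 = a ^ 2 - 4 * b) ∨ ∃ r m : R, r ^ 2 = b ∧ m ^ 2 = -a + 2 * r := by
  obtain ⟨h3, h2, h1, h0⟩ := X_pow_four_add_eq_mul_quadratics_iff.mp h
  have hsvt : s * (v - t) = 0 := by linear_combination h1 - t * h3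
  rcases mul_eq_zero.mp hsvt with hs | hvt
  · exact .inl ⟨t - v, by linear_combination (t + v + a) * (h2 - u * hs) - 4 * h0⟩
  · exact .inr ⟨t, s, by linear_combination h0 - t * hvt,
      by linear_combination s * h3 - h2 + hvt⟩

end CommRing

lemma X_pow_four_add_eq_mul_of_sq_eq {K : Type*} [Field K] (h2 : (2 : K) ≠ 0) {a b m : K}
    (hm : m ^ 2 = a ^ 2 - 4 * b) :
    X ^ 4 + C a * X ^ 2 + C b =
      (X ^ 2 + C 0 * X + C ((a + m) / 2)) * (X ^ 2 + C 0 * X + C ((a - m) / 2)) := by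
  refine X_pow_four_add_eq_mul_quadratics_iff.mpr ⟨by ring, ?_, by ring, ?_⟩
  · field_simp
    ring
  · field_simp
    linear_combination -hm

end Polynomial

theorem biquadratic_reducible_iff_general {M : Type*} [Field M] (h2 : (2 : M) ≠ 0)
    (a b : M) :
    ¬ Irreducible (X ^ 4 + C a * X ^ 2 + C b : M[X]) ↔
      (∃ m : M, m ^ 2 = a ^ 2 - 4 * b) ∨
      (∃ r m : M, r ^ 2 = b ∧ m ^ 2 = -a + 2 * r) ∨
      (∃ r m : M, r ^ 2 = b ∧ m ^ 2 = -a - 2 * r) := by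
  have hmonic : IsMonicOfDegree (X ^ 4 + C a * X ^ 2 + C b : M[X]) 4 :=
    ⟨by compute_degree!, by monicity!⟩
  rw [not_irreducible_iff_exists_isRoot_or_eq_mul_quadratics hmonic]
  constructor
  · rintro (⟨x, hx⟩ | ⟨s, t, u, v, h⟩)
    · exact .inl ⟨_, sq_eq_of_isRoot_X_pow_four_add hx⟩
    · exact (exists_sq_of_X_pow_four_add_eq_mul_quadratics h).imp_right .inl
  · rintro (⟨m, hm⟩ | ⟨r, m, hr, hm⟩ | ⟨r, m, hr, hm⟩)
    · exact .inr ⟨_, _, _, _, X_pow_four_add_eq_mul_of_sq_eq h2 hm⟩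
    · exact .inr ⟨m, r, -m, r, X_pow_four_add_eq_mul_quadratics_iff.mpr
        ⟨by ring, by linear_combination -hm, by ring, by linear_combination hr⟩⟩
    · exact .inr ⟨m, -r, -m, -r, X_pow_four_add_eq_mul_quadratics_iff.mpr
        ⟨by ring, by linear_combination -hm, by ring, by linear_combination hr⟩⟩

/-- Reducibility criterion for the biquadratic `X⁴+aX²+b` over a field of
characteristic ≠ 2 with `b(a²-4b) ≠ 0`. -/
theorem biquadratic_reducible_iff {M : Type*} [Field M] (h2 : (2 : M) ≠ 0)
    (a b : M) (hb : b * (a ^ 2 - 4 * b) ≠ 0) :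
    ¬ Irreducible (X ^ 4 + C a * X ^ 2 + C b : M[X]) ↔
      (∃ m : M, m ^ 2 = a ^ 2 - 4 * b) ∨
      (∃ r m : M, r ^ 2 = b ∧ m ^ 2 = -a + 2 * r) ∨
      (∃ r m : M, r ^ 2 = b ∧ m ^ 2 = -a - 2 * r) :=
  biquadratic_reducible_iff_general h2 a b
end

section
/- Let M be a field of characteristic not 2 and a, b in M with b(a^2 - 4b) ≠ 0, and let f(X) = X^4 + aX^2 + b. For any y, w in M such that bw^2 - awy + y^2 ≠ 0 and the resulting quartic is separable, the splitting field over M of X^4 + a'X^2 + b' with a' = a^3w^2 - 3abw^2 - 2a^2wy + 4bwy + ay^2 and b' = b(bw^2 - awy + y^2)^2 is contained in the splitting field of f over M. -/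
open Polynomial

/-! The roots of `X⁴ + aX² + b` are `±α, ±β` with `α² + β² = -a` and `α²β² = b`. For
`u = yα + wα³` and `v = yβ + wβ³` one computes `u² + v² = -a'` and `u²v² = b'`, so
`X⁴ + a'X² + b' = (X² - u²)(X² - v²)` and its roots `±u, ±v` are polynomials in `α` and `β`. -/

section Biquadratic

variable {R : Type*} [CommRing R]

noncomputable def biquadratic (a b : R) : R[X] := X ^ 4 + C a * X ^ 2 + C b

theorem monic_biquadratic [Nontrivial R] (a b : R) : (biquadratic a b).Monic := by
  unfold biquadratic
  monicity!

theorem aeval_biquadratic {S : Type*} [CommRing S] [Algebra R S] (a b : R) (x : S) :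
    aeval x (biquadratic a b) = x ^ 4 + algebraMap R S a * x ^ 2 + algebraMap R S b := by
  simp [biquadratic]

theorem pow_four_add_mul_sq_add_eq_zero {a b α β : R} (hsum : α ^ 2 + β ^ 2 = -a)
    (hprod : α ^ 2 * β ^ 2 = b) : α ^ 4 + a * α ^ 2 + b = 0 := by
  linear_combination α ^ 2 * hsum - hprod

theorem tschirnhausen_eq_mul {a b α β : R} (hsum : α ^ 2 + β ^ 2 = -a)
    (hprod : α ^ 2 * β ^ 2 = b) (y w z : R) :
    z ^ 4 + (a ^ 3 * w ^ 2 - 3 * a * b * w ^ 2 - 2 * a ^ 2 * w * y + 4 * b * w * y + a * y ^ 2)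
        * z ^ 2 + b * (b * w ^ 2 - a * w * y + y ^ 2) ^ 2
      = (z ^ 2 - (y * α + w * α ^ 3) ^ 2) * (z ^ 2 - (y * β + w * β ^ 3) ^ 2) := by
  obtain rfl : a = -(α ^ 2 + β ^ 2) := by rw [hsum, neg_neg]
  subst hprod
  ring

end Biquadratic

theorem IsAlgClosed.exists_sq_add_sq_and_sq_mul_sq {K : Type*} [Field K] [IsAlgClosed K]
    (a b : K) : ∃ α β : K, α ^ 2 + β ^ 2 = -a ∧ α ^ 2 * β ^ 2 = b := by
  have hdeg : (X ^ 2 + C a * X + C b).degree = 2 := by compute_degree!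
  obtain ⟨r, hr⟩ := IsAlgClosed.exists_root _ (hdeg ▸ two_ne_zero)
  obtain ⟨α, rfl⟩ := IsAlgClosed.exists_pow_nat_eq r two_pos
  obtain ⟨β, hβ⟩ := IsAlgClosed.exists_pow_nat_eq (-a - α ^ 2) two_pos
  refine ⟨α, β, by rw [hβ]; ring, ?_⟩
  simp only [IsRoot, eval_add, eval_mul, eval_pow, eval_C, eval_X] at hr
  linear_combination α ^ 2 * hβ - hr

theorem SetLike.mem_of_sq_eq_sq {K S : Type*} [CommRing K] [NoZeroDivisors K] [SetLike S K]
    [NegMemClass S K] {s : S} {u z : K} (hu : u ∈ s) (h : z ^ 2 = u ^ 2) : z ∈ s := by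
  rcases sq_eq_sq_iff_eq_or_eq_neg.1 h with rfl | rfl
  exacts [hu, neg_mem hu]

theorem mem_adjoin_rootSet_biquadratic {M K : Type*} [Field M] [Field K] [Algebra M K]
    {a b : M} {x : K} (hx : x ^ 4 + algebraMap M K a * x ^ 2 + algebraMap M K b = 0) :
    x ∈ IntermediateField.adjoin M ((biquadratic a b).rootSet K) :=
  IntermediateField.subset_adjoin _ _ <| by
    rw [mem_rootSet_of_ne (monic_biquadratic a b).ne_zero, aeval_biquadratic, hx]

theorem tschirnhausen_splitting_field_le_general {M : Type*} [Field M] (a b y w : M) :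
    IntermediateField.adjoin M
        ((X ^ 4 + C (a ^ 3 * w ^ 2 - 3 * a * b * w ^ 2 - 2 * a ^ 2 * w * y
            + 4 * b * w * y + a * y ^ 2) * X ^ 2
          + C (b * (b * w ^ 2 - a * w * y + y ^ 2) ^ 2) : M[X]).rootSet
          (AlgebraicClosure M)) ≤
      IntermediateField.adjoin M
        ((X ^ 4 + C a * X ^ 2 + C b : M[X]).rootSet (AlgebraicClosure M)) := by
  set K := AlgebraicClosure M
  set F := IntermediateField.adjoin M ((biquadratic a b).rootSet K)
  obtain ⟨α, β, hsum, hprod⟩ :=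
    IsAlgClosed.exists_sq_add_sq_and_sq_mul_sq (algebraMap M K a) (algebraMap M K b)
  have transform_mem {γ : K} (hγ : γ ∈ F) :
      algebraMap M K y * γ + algebraMap M K w * γ ^ 3 ∈ F :=
    add_mem (mul_mem (F.algebraMap_mem y) hγ) (mul_mem (F.algebraMap_mem w) (pow_mem hγ 3))
  have hα : α ∈ F := mem_adjoin_rootSet_biquadratic (pow_four_add_mul_sq_add_eq_zero hsum hprod)
  have hβ : β ∈ F := mem_adjoin_rootSet_biquadratic
    (pow_four_add_mul_sq_add_eq_zero ((add_comm _ _).trans hsum) ((mul_comm _ _).trans hprod))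
  change IntermediateField.adjoin M ((biquadratic _ _).rootSet K) ≤ F
  rw [IntermediateField.adjoin_le_iff]
  intro z hz
  rw [mem_rootSet_of_ne (monic_biquadratic _ _).ne_zero, aeval_biquadratic] at hz
  simp only [map_add, map_sub, map_mul, map_pow, map_ofNat] at hz
  rw [tschirnhausen_eq_mul hsum hprod, mul_eq_zero, sub_eq_zero, sub_eq_zero] at hz
  rcases hz with hzα | hzβ
  · exact SetLike.mem_of_sq_eq_sq (transform_mem hα) hzα
  · exact SetLike.mem_of_sq_eq_sq (transform_mem hβ) hzβ

/-- The splitting field of the Tschirnhausen transform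
`X⁴ + a'X² + b'` (with `a' = a³w²-3abw²-2a²wy+4bwy+ay²`,
`b' = b(bw²-awy+y²)²`) is contained in the splitting field of `X⁴+aX²+b`. -/
theorem tschirnhausen_splitting_field_le {M : Type*} [Field M] (h2 : (2 : M) ≠ 0)
    (a b y w : M) (hb : b * (a ^ 2 - 4 * b) ≠ 0)
    (hyw : b * w ^ 2 - a * w * y + y ^ 2 ≠ 0)
    (hsep : (X ^ 4 + C (a ^ 3 * w ^ 2 - 3 * a * b * w ^ 2 - 2 * a ^ 2 * w * y
        + 4 * b * w * y + a * y ^ 2) * X ^ 2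
        + C (b * (b * w ^ 2 - a * w * y + y ^ 2) ^ 2) : M[X]).Separable) :
    IntermediateField.adjoin M
        ((X ^ 4 + C (a ^ 3 * w ^ 2 - 3 * a * b * w ^ 2 - 2 * a ^ 2 * w * y
            + 4 * b * w * y + a * y ^ 2) * X ^ 2
          + C (b * (b * w ^ 2 - a * w * y + y ^ 2) ^ 2) : M[X]).rootSet
          (AlgebraicClosure M)) ≤
      IntermediateField.adjoin M
        ((X ^ 4 + C a * X ^ 2 + C b : M[X]).rootSet (AlgebraicClosure M)) :=
  tschirnhausen_splitting_field_le_general a b y w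
end

section
/- For a field M of characteristic not 2 containing a and b with f(X) = X^4 + bX + b separable over M (b ≠ 0, 256b ≠ 27b^2), the quartics X^4 + bX + b and X^4 + 2bX^2 + b^2 X + b^2 have the same splitting field over M. -/
/-!
The two quartics are related by the Tschirnhausen transformation `y = -x²`, whose inverse on
roots is `x = -(y² + b) / b`. Hence each root of either quartic is a rational expression over
`M` in a root of the other, and the two root sets generate the same field.
-/

open Polynomial

section TschirnhausenRoots

variable {K : Type*}

theorem neg_sq_tschirnhausen_root [CommRing K] {β x : K} (hx : x ^ 4 + β * x + β = 0) :
    (-x ^ 2) ^ 4 + 2 * β * (-x ^ 2) ^ 2 + β ^ 2 * (-x ^ 2) + β ^ 2 = 0 := by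
  linear_combination (x ^ 4 - β * x + β) * hx

theorem eq_tschirnhausen_inverse_neg_sq [Field K] {β x : K} (hβ : β ≠ 0)
    (hx : x ^ 4 + β * x + β = 0) : x = -((-x ^ 2) ^ 2 + β) / β := by
  field_simp
  linear_combination hx

theorem tschirnhausen_inverse_root [Field K] {β y : K} (hβ : β ≠ 0)
    (hy : y ^ 4 + 2 * β * y ^ 2 + β ^ 2 * y + β ^ 2 = 0) :
    (-(y ^ 2 + β) / β) ^ 4 + β * (-(y ^ 2 + β) / β) + β = 0 := by
  field_simp
  linear_combination (y ^ 4 + 2 * β * y ^ 2 - β ^ 2 * y + β ^ 2) * hy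

theorem eq_neg_sq_tschirnhausen_inverse [Field K] {β y : K} (hβ : β ≠ 0)
    (hy : y ^ 4 + 2 * β * y ^ 2 + β ^ 2 * y + β ^ 2 = 0) :
    y = -(-(y ^ 2 + β) / β) ^ 2 := by
  field_simp
  linear_combination hy

end TschirnhausenRoots

section RootSets

variable {M K : Type*} [Field M] [CommRing K] [IsDomain K] [Algebra M K] (b : M) {x : K}

theorem mem_rootSet_X_pow_four_add_C_mul_X_add_C :
    x ∈ (X ^ 4 + C b * X + C b : M[X]).rootSet K ↔
      x ^ 4 + algebraMap M K b * x + algebraMap M K b = 0 := by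
  rw [mem_rootSet_of_ne (Monic.ne_zero (by monicity!))]
  simp

theorem mem_rootSet_tschirnhausen_quartic :
    x ∈ (X ^ 4 + C (2 * b) * X ^ 2 + C (b ^ 2) * X + C (b ^ 2) : M[X]).rootSet K ↔
      x ^ 4 + 2 * algebraMap M K b * x ^ 2 + algebraMap M K b ^ 2 * x +
        algebraMap M K b ^ 2 = 0 := by
  rw [mem_rootSet_of_ne (Monic.ne_zero (by monicity!))]
  simp [map_ofNat]

end RootSets

theorem s4_example_splitting_field_general {M : Type*} [Field M]
    (b : M) (hb : b ≠ 0) :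
    IntermediateField.adjoin M
        ((X ^ 4 + C b * X + C b : M[X]).rootSet (AlgebraicClosure M)) =
      IntermediateField.adjoin M
        ((X ^ 4 + C (2 * b) * X ^ 2 + C (b ^ 2) * X + C (b ^ 2) : M[X]).rootSet
          (AlgebraicClosure M)) := by
  have hβ : algebraMap M (AlgebraicClosure M) b ≠ 0 := by simpa using hb
  have hβ_mem {S : Set (AlgebraicClosure M)} :
      algebraMap M _ b ∈ IntermediateField.adjoin M S :=
    IntermediateField.algebraMap_mem _ b
  apply le_antisymm <;> rw [IntermediateField.adjoin_le_iff]
  · intro x hx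
    rw [mem_rootSet_X_pow_four_add_C_mul_X_add_C] at hx
    have hy := IntermediateField.subset_adjoin M _ <|
      (mem_rootSet_tschirnhausen_quartic b).2 (neg_sq_tschirnhausen_root hx)
    rw [SetLike.mem_coe, eq_tschirnhausen_inverse_neg_sq hβ hx]
    exact div_mem (neg_mem (add_mem (pow_mem hy 2) hβ_mem)) hβ_mem
  · intro y hy
    rw [mem_rootSet_tschirnhausen_quartic] at hy
    have hx := IntermediateField.subset_adjoin M _ <|
      (mem_rootSet_X_pow_four_add_C_mul_X_add_C b).2 (tschirnhausen_inverse_root hβ hy)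
    rw [SetLike.mem_coe, eq_neg_sq_tschirnhausen_inverse hβ hy]
    exact neg_mem (pow_mem hx 2)

/-- The quartics `X⁴+bX+b` and `X⁴+2bX²+b²X+b²` have the same splitting field over
a field `M` of characteristic ≠ 2, when `X⁴+bX+b` is separable
(`b ≠ 0`, `256b ≠ 27b²`). -/
theorem s4_example_splitting_field {M : Type*} [Field M] (h2 : (2 : M) ≠ 0)
    (b : M) (hb : b ≠ 0) (hb' : 256 * b ≠ 27 * b ^ 2) :
    IntermediateField.adjoin M
        ((X ^ 4 + C b * X + C b : M[X]).rootSet (AlgebraicClosure M)) =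
      IntermediateField.adjoin M
        ((X ^ 4 + C (2 * b) * X ^ 2 + C (b ^ 2) * X + C (b ^ 2) : M[X]).rootSet
          (AlgebraicClosure M)) :=
  s4_example_splitting_field_general b hb
end

section
/- Let M be a field of characteristic not 2 and i ∈ M a primitive 4th root of unity. Let a, c ∈ M with ac ≠ 0 and c^2 + 4 ≠ 0. Then Resultant_X( X^4 + aX^2 + a^2/(c^2+4), Y - ( ((c+i)(c-2i)/c) X + ((c^2+4)/(ac)) X^3 ) ) = Y^4 - a^2 (c-2i)/(c+2i), as polynomials in Y. In particular X^4 + aX^2 + a^2/(c^2+4) and X^4 - a^2(c-2i)/(c+2i) have the same splitting field over M. -/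
/-!
The quartic `X⁴ + aX² + b`, `b = a²/(c²+4)`, is even, so its roots are `±r, ±s` with
`r² + s² = -a` and `r²s² = b`, while `g(x) = Ax + Bx³` with `A = (c+i)(c-2i)/c` and
`B = (c²+4)/(ac)` is odd. Hence `∏ⱼ (Y - g(xⱼ)) = (Y² - g(r)²)(Y² - g(s)²)`, and since
`g(x)² = x²(A + Bx²)²`, the symmetric functions `g(r)² + g(s)²` and `g(r)²g(s)²` are
polynomials in `r² + s²` and `r²s²`; they evaluate to `0` and `-a²(c-2i)/(c+2i)`.
Conversely, every root of the quartic satisfies `x = -2a(c-2i) g(x) / ((c²+4) g(x)² - a(c-2i)²)`,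
so it is a rational function over `M` of its image, and the two root fields coincide.
-/

open Polynomial

theorem prod_X_sub_C_fin_four {R : Type*} [CommRing R] (x : Fin 4 → R) :
    ∏ j, (X - C (x j)) =
      X ^ 4 - C (x 0 + x 1 + x 2 + x 3) * X ^ 3
        + C (x 0 * x 1 + x 0 * x 2 + x 0 * x 3 + x 1 * x 2 + x 1 * x 3 + x 2 * x 3) * X ^ 2
        - C (x 0 * x 1 * x 2 + x 0 * x 1 * x 3 + x 0 * x 2 * x 3 + x 1 * x 2 * x 3) * X
        + C (x 0 * x 1 * x 2 * x 3) := by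
  simp only [Fin.prod_univ_four, map_add, map_mul]
  ring

theorem exists_pm_pairs_of_prod_X_sub_C_eq {R N : Type*} [CommRing R] [IsDomain R] [CommMonoid N]
    {a b : R} {x : Fin 4 → R} (hx : ∏ j, (X - C (x j)) = X ^ 4 + C a * X ^ 2 + C b)
    (F : R → N) :
    ∃ r s : R, r ^ 2 + s ^ 2 = -a ∧ r ^ 2 * s ^ 2 = b ∧
      ∏ j, F (x j) = F r * F (-r) * F s * F (-s) := by
  have hcoeff (n : ℕ) := congrArg (coeff · n) ((prod_X_sub_C_fin_four x).symm.trans hx)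
  simp only [coeff_add, coeff_sub, coeff_C_mul, coeff_X_pow, coeff_X, coeff_C] at hcoeff
  have e1 : x 0 + x 1 + x 2 + x 3 = 0 := by
    have h := hcoeff 3; norm_num at h; linear_combination -h
  have e2 : x 0 * x 1 + x 0 * x 2 + x 0 * x 3 + x 1 * x 2 + x 1 * x 3 + x 2 * x 3 = a := by
    simpa using hcoeff 2
  have e3 : x 0 * x 1 * x 2 + x 0 * x 1 * x 3 + x 0 * x 2 * x 3 + x 1 * x 2 * x 3 = 0 := by
    have h := hcoeff 1; norm_num at h; linear_combination -h
  have e4 : x 0 * x 1 * x 2 * x 3 = b := by simpa using hcoeff 0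
  have hpairs : (x 0 + x 1) * (x 0 + x 2) * (x 1 + x 2) = 0 := by
    linear_combination (x 0 * x 1 + x 0 * x 2 + x 1 * x 2) * e1 - e3
  rw [Fin.prod_univ_four]
  rcases mul_eq_zero.1 hpairs with h | h12
  · rcases mul_eq_zero.1 h with h01 | h02
    · have h1 : x 1 = -x 0 := by linear_combination h01
      have h3 : x 3 = -x 2 := by linear_combination e1 - h01
      rw [h1, h3] at e2 e4 ⊢
      exact ⟨x 0, x 2, by linear_combination -e2, by linear_combination e4, rfl⟩
    · have h2 : x 2 = -x 0 := by linear_combination h02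
      have h3 : x 3 = -x 1 := by linear_combination e1 - h02
      rw [h2, h3] at e2 e4 ⊢
      exact ⟨x 0, x 1, by linear_combination -e2, by linear_combination e4, by ac_rfl⟩
  · have h2 : x 2 = -x 1 := by linear_combination h12
    have h3 : x 3 = -x 0 := by linear_combination e1 - h12
    rw [h2, h3] at e2 e4 ⊢
    exact ⟨x 0, x 1, by linear_combination -e2, by linear_combination e4, by ac_rfl⟩

theorem rootSet_eq_range_of_map_eq_prod {R K ι : Type*} [CommRing R] [Field K] [Algebra R K]
    [Fintype ι] {p : R[X]} {x : ι → K} (h : p.map (algebraMap R K) = ∏ j, (X - C (x j))) :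
    p.rootSet K = Set.range x := by
  classical
  have hprod : ∏ j, (X - C (x j)) = ((Finset.univ.val.map x).map fun u ↦ X - C u).prod := by
    rw [Multiset.map_map]; rfl
  rw [rootSet_def, aroots_def, h, hprod, roots_multiset_prod_X_sub_C, Multiset.toFinset_map]
  simp

section Kummer

variable {K : Type*} [Field K] {i a c : K}

def kummerFactor (i a c u : K) : K := (c + i) * (c - 2 * i) / c + (c ^ 2 + 4) / (a * c) * u

def kummerMap (i a c x : K) : K := (c + i) * (c - 2 * i) / c * x + (c ^ 2 + 4) / (a * c) * x ^ 3

theorem kummerMap_neg (x : K) : kummerMap i a c (-x) = -kummerMap i a c x := by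
  unfold kummerMap; ring

theorem kummerMap_sq (x : K) :
    kummerMap i a c x ^ 2 = x ^ 2 * kummerFactor i a c (x ^ 2) ^ 2 := by
  unfold kummerMap kummerFactor; ring

theorem kummerFactor_mul_kummerFactor (hi : i ^ 2 = -1) (ha : a ≠ 0) (hc : c ≠ 0)
    (h4 : c ^ 2 + 4 ≠ 0) {u v : K} (hsum : u + v = -a) (hprod : u * v = a ^ 2 / (c ^ 2 + 4)) :
    kummerFactor i a c u * kummerFactor i a c v = -i * (c - 2 * i) := by
  rw [eq_div_iff h4] at hprod
  unfold kummerFactor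
  field_simp
  grind

theorem mul_kummerFactor_sq_add_mul_kummerFactor_sq (hi : i ^ 2 = -1) (ha : a ≠ 0)
    (h4 : c ^ 2 + 4 ≠ 0) {u v : K} (hsum : u + v = -a) (hprod : u * v = a ^ 2 / (c ^ 2 + 4)) :
    u * kummerFactor i a c u ^ 2 + v * kummerFactor i a c v ^ 2 = 0 := by
  rw [eq_div_iff h4] at hprod
  unfold kummerFactor
  field_simp
  grind

theorem prod_X_sub_C_kummerMap_pm (hi : i ^ 2 = -1) (ha : a ≠ 0) (hc : c ≠ 0)
    (h4 : c ^ 2 + 4 ≠ 0) {r s : K} (hsum : r ^ 2 + s ^ 2 = -a)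
    (hprod : r ^ 2 * s ^ 2 = a ^ 2 / (c ^ 2 + 4)) :
    (X - C (kummerMap i a c r)) * (X - C (kummerMap i a c (-r))) *
      (X - C (kummerMap i a c s)) * (X - C (kummerMap i a c (-s))) =
      X ^ 4 - C (a ^ 2 * (c - 2 * i) / (c + 2 * i)) := by
  have hp : c + 2 * i ≠ 0 := fun h ↦ h4 (by linear_combination (c - 2 * i) * h + 4 * hi)
  have hsum' : kummerMap i a c r ^ 2 + kummerMap i a c s ^ 2 = 0 := by
    rw [kummerMap_sq, kummerMap_sq]
    exact mul_kummerFactor_sq_add_mul_kummerFactor_sq hi ha h4 hsum hprod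
  have hprod' : kummerMap i a c r ^ 2 * kummerMap i a c s ^ 2 =
      -(a ^ 2 * (c - 2 * i) / (c + 2 * i)) := by
    calc _ = r ^ 2 * s ^ 2 * (kummerFactor i a c (r ^ 2) * kummerFactor i a c (s ^ 2)) ^ 2 := by
          rw [kummerMap_sq, kummerMap_sq]; ring
      _ = _ := by
          rw [kummerFactor_mul_kummerFactor hi ha hc h4 hsum hprod, hprod, ← neg_div,
            eq_div_iff hp]
          field_simp
          grind
  replace hsum' := congrArg C hsum'
  replace hprod' := congrArg C hprod'
  simp only [map_add, map_mul, map_pow, map_neg, map_zero] at hsum' hprod'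
  simp only [kummerMap_neg, map_neg]
  linear_combination (-(X : K[X]) ^ 2) * hsum' + hprod'

theorem prod_X_sub_C_kummerMap (hi : i ^ 2 = -1) (ha : a ≠ 0) (hc : c ≠ 0)
    (h4 : c ^ 2 + 4 ≠ 0) {x : Fin 4 → K}
    (hx : ∏ j, (X - C (x j)) = X ^ 4 + C a * X ^ 2 + C (a ^ 2 / (c ^ 2 + 4))) :
    ∏ j, (X - C (kummerMap i a c (x j))) = X ^ 4 - C (a ^ 2 * (c - 2 * i) / (c + 2 * i)) := by
  obtain ⟨r, s, hsum, hprod, hpairs⟩ :=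
    exists_pm_pairs_of_prod_X_sub_C_eq hx fun u ↦ X - C (kummerMap i a c u)
  rw [hpairs, prod_X_sub_C_kummerMap_pm hi ha hc h4 hsum hprod]

theorem eq_div_of_kummerMap (h2 : (2 : K) ≠ 0) (hi : i ^ 2 = -1) (ha : a ≠ 0) (hc : c ≠ 0)
    (h4 : c ^ 2 + 4 ≠ 0) {x : K} (hx : x ^ 4 + a * x ^ 2 + a ^ 2 / (c ^ 2 + 4) = 0) :
    x = -2 * a * (c - 2 * i) * kummerMap i a c x /
      ((c ^ 2 + 4) * kummerMap i a c x ^ 2 - a * (c - 2 * i) ^ 2) := by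
  have hm : c - 2 * i ≠ 0 := fun h ↦ h4 (by linear_combination (c + 2 * i) * h + 4 * hi)
  have hmul : x * ((c ^ 2 + 4) * kummerMap i a c x ^ 2 - a * (c - 2 * i) ^ 2) =
      -2 * a * (c - 2 * i) * kummerMap i a c x := by
    field_simp at hx
    unfold kummerMap
    field_simp
    grind
  have hden : (c ^ 2 + 4) * kummerMap i a c x ^ 2 - a * (c - 2 * i) ^ 2 ≠ 0 := by
    intro h0
    have hy : kummerMap i a c x = 0 := by
      rw [h0, mul_zero, eq_comm] at hmul
      simpa [h2, ha, hm] using hmul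
    rw [hy] at h0
    simp [ha, hm] at h0
  rw [eq_div_iff hden, hmul]

variable {S : Type*} [SetLike S K] [SubfieldClass S K] {F : S}

theorem kummerMap_mem (hi : i ∈ F) (ha : a ∈ F) (hc : c ∈ F) {x : K} (hx : x ∈ F) :
    kummerMap i a c x ∈ F := by
  unfold kummerMap
  apply_rules [div_mem, mul_mem, sub_mem, add_mem, pow_mem, ofNat_mem]

theorem mem_of_kummerMap_mem (h2 : (2 : K) ≠ 0) (hi : i ^ 2 = -1) (ha : a ≠ 0) (hc : c ≠ 0)
    (h4 : c ^ 2 + 4 ≠ 0) (hiF : i ∈ F) (haF : a ∈ F) (hcF : c ∈ F) {x : K}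
    (hx : x ^ 4 + a * x ^ 2 + a ^ 2 / (c ^ 2 + 4) = 0) (hy : kummerMap i a c x ∈ F) :
    x ∈ F := by
  rw [eq_div_of_kummerMap h2 hi ha hc h4 hx]
  apply_rules [div_mem, mul_mem, sub_mem, add_mem, pow_mem, neg_mem, ofNat_mem]

end Kummer

/-- With `i² = -1` in `M`, `ac ≠ 0`, `c²+4 ≠ 0`, and `x₁,…,x₄` the roots of
`f = X⁴+aX²+a²/(c²+4)` in an algebraic closure,
`Res_X(f(X), Y - (((c+i)(c-2i)/c)X + ((c²+4)/(ac))X³)) = ∏ⱼ (Y - g(xⱼ))`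
equals `Y⁴ - a²(c-2i)/(c+2i)`; in particular the two quartics have the same
splitting field over `M`. -/
theorem c4_kummer_form {M : Type*} [Field M] (h2 : (2 : M) ≠ 0)
    (i a c : M) (hi : i ^ 2 = -1) (hac : a * c ≠ 0) (hc : c ^ 2 + 4 ≠ 0)
    (x : Fin 4 → AlgebraicClosure M)
    (hx : (X ^ 4 + C a * X ^ 2 + C (a ^ 2 / (c ^ 2 + 4)) : M[X]).map
        (algebraMap M (AlgebraicClosure M)) = ∏ j, (X - C (x j))) :
    (∏ j, (X - C (algebraMap M (AlgebraicClosure M) ((c + i) * (c - 2 * i) / c) * x j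
        + algebraMap M (AlgebraicClosure M) ((c ^ 2 + 4) / (a * c)) * x j ^ 3))) =
      (X ^ 4 - C (a ^ 2 * (c - 2 * i) / (c + 2 * i)) : M[X]).map
        (algebraMap M (AlgebraicClosure M)) ∧
    IntermediateField.adjoin M
        ((X ^ 4 + C a * X ^ 2 + C (a ^ 2 / (c ^ 2 + 4)) : M[X]).rootSet
          (AlgebraicClosure M)) =
      IntermediateField.adjoin M
        ((X ^ 4 - C (a ^ 2 * (c - 2 * i) / (c + 2 * i)) : M[X]).rootSet
          (AlgebraicClosure M)) := by
  set φ := algebraMap M (AlgebraicClosure M)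
  obtain ⟨ha, hc0⟩ := mul_ne_zero_iff.1 hac
  have h2' : (2 : AlgebraicClosure M) ≠ 0 := by simpa [map_ofNat] using (map_ne_zero φ).2 h2
  have hi' : φ i ^ 2 = -1 := by rw [← map_pow, hi, map_neg, map_one]
  have ha' : φ a ≠ 0 := (map_ne_zero φ).2 ha
  have hc0' : φ c ≠ 0 := (map_ne_zero φ).2 hc0
  have h4' : φ c ^ 2 + 4 ≠ 0 := by simpa [map_ofNat] using (map_ne_zero φ).2 hc
  have hf : (X ^ 4 + C a * X ^ 2 + C (a ^ 2 / (c ^ 2 + 4)) : M[X]).map φ =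
      X ^ 4 + C (φ a) * X ^ 2 + C (φ a ^ 2 / (φ c ^ 2 + 4)) := by simp [map_ofNat]
  have hg (u) : φ ((c + i) * (c - 2 * i) / c) * u + φ ((c ^ 2 + 4) / (a * c)) * u ^ 3 =
      kummerMap (φ i) (φ a) (φ c) u := by simp [kummerMap, map_ofNat]
  simp only [hg]
  have hprod : ∏ j, (X - C (kummerMap (φ i) (φ a) (φ c) (x j))) =
      (X ^ 4 - C (a ^ 2 * (c - 2 * i) / (c + 2 * i)) : M[X]).map φ := by
    rw [prod_X_sub_C_kummerMap hi' ha' hc0' h4' (hx.symm.trans hf)]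
    simp [map_ofNat]
  refine ⟨hprod, ?_⟩
  rw [rootSet_eq_range_of_map_eq_prod hx, rootSet_eq_range_of_map_eq_prod hprod.symm]
  refine le_antisymm (IntermediateField.adjoin_le_iff.2 ?_)
    (IntermediateField.adjoin_le_iff.2 ?_)
  · rintro _ ⟨j, rfl⟩
    have hroot : x j ^ 4 + φ a * x j ^ 2 + φ a ^ 2 / (φ c ^ 2 + 4) = 0 := by
      have h := congrArg (eval (x j)) (hx.symm.trans hf)
      rw [eval_prod, Finset.prod_eq_zero (Finset.mem_univ j) (by simp)] at h
      simpa using h.symm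
    exact mem_of_kummerMap_mem h2' hi' ha' hc0' h4' (algebraMap_mem _ _) (algebraMap_mem _ _)
      (algebraMap_mem _ _) hroot (IntermediateField.subset_adjoin M _ ⟨j, rfl⟩)
  · rintro _ ⟨j, rfl⟩
    exact kummerMap_mem (algebraMap_mem _ _) (algebraMap_mem _ _) (algebraMap_mem _ _)
      (IntermediateField.subset_adjoin M _ ⟨j, rfl⟩)
end

section
/- Let M be a field of characteristic not 2 and n ∈ M with n^2 + 16 ≠ 0. Then the simplest quartic polynomial h_n(X) = X^4 - nX^3 - 6X^2 + nX + 1 and the polynomial H_n(X) = X^4 - (n^2+16)X^2 + 4(n^2+16) have the same splitting field over M. -/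
/-!
For `x ≠ 0` put `b = x + x⁻¹` and `c = x - x⁻¹`. Then
`x⁴ Hₙ(b) = hₙ(x) hₙ(-x)` and `hₙ(x) = x² (b² - 8 - n c)`.
So `x ↦ x + x⁻¹` sends roots of `hₙ` to roots of `Hₙ`, and each root of `Hₙ`, written
`b = x + x⁻¹` in the algebraic closure, comes from a root `x` or `-x` of `hₙ`: the splitting
field of `hₙ` contains that of `Hₙ`. Conversely `x = (b + c) / 2`, where `c = (b² - 8) / n`
if `n ≠ 0`, while for `n = 0` the relation `c² = b² - 4 = 4` forces `c = ±2`.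
-/

open Polynomial

section
variable {R : Type*} [CommRing R]

noncomputable def simplestQuartic (n : R) : R[X] :=
  X ^ 4 - C n * X ^ 3 - C 6 * X ^ 2 + C n * X + C 1

noncomputable def simplestQuarticTrace (n : R) : R[X] :=
  X ^ 4 - C (n ^ 2 + 16) * X ^ 2 + C (4 * (n ^ 2 + 16))

theorem simplestQuartic_monic (n : R) : (simplestQuartic n).Monic := by
  unfold simplestQuartic; monicity!

theorem simplestQuarticTrace_monic (n : R) : (simplestQuarticTrace n).Monic := by
  unfold simplestQuarticTrace; monicity!

variable {A : Type*} [CommRing A] [Algebra R A]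

@[simp]
theorem aeval_simplestQuartic (n : R) (x : A) :
    aeval x (simplestQuartic n) =
      x ^ 4 - algebraMap R A n * x ^ 3 - 6 * x ^ 2 + algebraMap R A n * x + 1 := by
  simp [simplestQuartic, map_ofNat]

@[simp]
theorem aeval_simplestQuarticTrace (n : R) (y : A) :
    aeval y (simplestQuarticTrace n) =
      y ^ 4 - (algebraMap R A n ^ 2 + 16) * y ^ 2 + 4 * (algebraMap R A n ^ 2 + 16) := by
  simp [simplestQuarticTrace, map_ofNat]

end

theorem IsAlgClosed.exists_add_inv_eq {K : Type*} [Field K] [IsAlgClosed K] (y : K) :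
    ∃ x ≠ 0, x + x⁻¹ = y := by
  have hdeg : (X ^ 2 - C y * X + 1 : K[X]).degree = 2 := by compute_degree!
  obtain ⟨x, hx⟩ := IsAlgClosed.exists_root (X ^ 2 - C y * X + 1) (by rw [hdeg]; decide)
  have hx : x ^ 2 - y * x + 1 = 0 := by simpa using hx
  have hx0 : x ≠ 0 := by rintro rfl; simp at hx
  exact ⟨x, hx0, by field_simp; linear_combination hx⟩

section
variable {R K : Type*} [CommRing R] [Field K] [Algebra R K] {n : R} {x : K}

theorem aeval_simplestQuartic_eq (n : R) (hx : x ≠ 0) :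
    aeval x (simplestQuartic n) =
      x ^ 2 * ((x + x⁻¹) ^ 2 - 8 - algebraMap R K n * (x - x⁻¹)) := by
  simp only [aeval_simplestQuartic]
  field_simp
  ring

theorem aeval_simplestQuarticTrace_add_inv (n : R) (hx : x ≠ 0) :
    aeval (x + x⁻¹) (simplestQuarticTrace n) =
      aeval x (simplestQuartic n) * aeval (-x) (simplestQuartic n) / x ^ 4 := by
  simp only [aeval_simplestQuartic, aeval_simplestQuarticTrace]
  field_simp
  ring

theorem mem_rootSet_simplestQuartic :
    x ∈ (simplestQuartic n).rootSet K ↔ aeval x (simplestQuartic n) = 0 :=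
  (simplestQuartic_monic n).mem_rootSet

theorem mem_rootSet_simplestQuarticTrace :
    x ∈ (simplestQuarticTrace n).rootSet K ↔ aeval x (simplestQuarticTrace n) = 0 :=
  (simplestQuarticTrace_monic n).mem_rootSet

theorem ne_zero_of_mem_rootSet_simplestQuartic (hx : x ∈ (simplestQuartic n).rootSet K) :
    x ≠ 0 := by
  rintro rfl
  simp [mem_rootSet_simplestQuartic] at hx

theorem add_inv_mem_rootSet_simplestQuarticTrace (hx : x ∈ (simplestQuartic n).rootSet K) :
    x + x⁻¹ ∈ (simplestQuarticTrace n).rootSet K := by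
  rw [mem_rootSet_simplestQuarticTrace, aeval_simplestQuarticTrace_add_inv n
    (ne_zero_of_mem_rootSet_simplestQuartic hx), mem_rootSet_simplestQuartic.1 hx, zero_mul,
    zero_div]

theorem mem_rootSet_simplestQuartic_or_neg (hx : x ≠ 0)
    (hy : x + x⁻¹ ∈ (simplestQuarticTrace n).rootSet K) :
    x ∈ (simplestQuartic n).rootSet K ∨ -x ∈ (simplestQuartic n).rootSet K := by
  rw [mem_rootSet_simplestQuarticTrace, aeval_simplestQuarticTrace_add_inv n hx,
    div_eq_zero_iff, or_iff_left (pow_ne_zero 4 hx), mul_eq_zero] at hy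
  simpa only [mem_rootSet_simplestQuartic] using hy

variable {S : Type*} [SetLike S K] [SubfieldClass S K] {F : S}

theorem sub_inv_mem_of_add_inv_mem [SMulMemClass S R K]
    (hx : x ∈ (simplestQuartic n).rootSet K) (hb : x + x⁻¹ ∈ F) : x - x⁻¹ ∈ F := by
  have hx0 := ne_zero_of_mem_rootSet_simplestQuartic hx
  have hrel : (x + x⁻¹) ^ 2 - 8 = algebraMap R K n * (x - x⁻¹) := by
    rw [mem_rootSet_simplestQuartic, aeval_simplestQuartic_eq n hx0] at hx
    linear_combination (mul_eq_zero.1 hx).resolve_left (pow_ne_zero 2 hx0)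
  by_cases hn : algebraMap R K n = 0
  · have hsq : (x - x⁻¹ - 2) * (x - x⁻¹ + 2) = 0 := by
      rw [hn, zero_mul] at hrel
      field_simp at hrel ⊢
      linear_combination hrel
    rcases mul_eq_zero.1 hsq with h | h
    · rw [sub_eq_zero.1 h]; exact ofNat_mem F 2
    · rw [eq_neg_of_add_eq_zero_left h]; exact neg_mem (ofNat_mem F 2)
  · rw [show x - x⁻¹ = ((x + x⁻¹) ^ 2 - 8) / algebraMap R K n by
      rw [hrel, mul_div_cancel_left₀ _ hn]]
    exact div_mem (sub_mem (pow_mem hb 2) (ofNat_mem F 8)) (algebraMap_mem F n)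

theorem rootSet_simplestQuartic_subset [SMulMemClass S R K] (h2 : (2 : K) ≠ 0)
    (hF : (simplestQuarticTrace n).rootSet K ⊆ F) : (simplestQuartic n).rootSet K ⊆ F := by
  intro x hx
  have hx0 := ne_zero_of_mem_rootSet_simplestQuartic hx
  have hb := hF (add_inv_mem_rootSet_simplestQuarticTrace hx)
  rw [show x = ((x + x⁻¹) + (x - x⁻¹)) / 2 by field_simp; ring]
  exact div_mem (add_mem hb (sub_inv_mem_of_add_inv_mem hx hb)) (ofNat_mem F 2)

theorem rootSet_simplestQuarticTrace_subset [IsAlgClosed K]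
    (hF : (simplestQuartic n).rootSet K ⊆ F) : (simplestQuarticTrace n).rootSet K ⊆ F := by
  intro y hy
  obtain ⟨x, hx0, rfl⟩ := IsAlgClosed.exists_add_inv_eq y
  have hxF : x ∈ F := by
    rcases mem_rootSet_simplestQuartic_or_neg hx0 hy with hx | hx
    · exact hF hx
    · simpa using neg_mem (hF hx)
  exact add_mem hxF (inv_mem hxF)

end

theorem simplest_quartic_splitting_field_general {M : Type*} [Field M] (h2 : (2 : M) ≠ 0)
    (n : M) :
    IntermediateField.adjoin M
        ((X ^ 4 - C n * X ^ 3 - C 6 * X ^ 2 + C n * X + C 1 : M[X]).rootSet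
          (AlgebraicClosure M)) =
      IntermediateField.adjoin M
        ((X ^ 4 - C (n ^ 2 + 16) * X ^ 2 + C (4 * (n ^ 2 + 16)) : M[X]).rootSet
          (AlgebraicClosure M)) := by
  have h2K : (2 : AlgebraicClosure M) ≠ 0 := by
    rw [← map_ofNat (algebraMap M _) 2]
    exact (_root_.map_ne_zero _).2 h2
  change IntermediateField.adjoin M ((simplestQuartic n).rootSet _) =
    IntermediateField.adjoin M ((simplestQuarticTrace n).rootSet _)
  refine le_antisymm ?_ ?_ <;> rw [IntermediateField.adjoin_le_iff]
  · exact rootSet_simplestQuartic_subset h2K (IntermediateField.subset_adjoin M _)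
  · exact rootSet_simplestQuarticTrace_subset (IntermediateField.subset_adjoin M _)

/-- The simplest quartic `hₙ(X) = X⁴-nX³-6X²+nX+1` and
`Hₙ(X) = X⁴-(n²+16)X²+4(n²+16)` have the same splitting field over a field `M`
of characteristic ≠ 2 when `n²+16 ≠ 0`. -/
theorem simplest_quartic_splitting_field {M : Type*} [Field M] (h2 : (2 : M) ≠ 0)
    (n : M) (hn : n ^ 2 + 16 ≠ 0) :
    IntermediateField.adjoin M
        ((X ^ 4 - C n * X ^ 3 - C 6 * X ^ 2 + C n * X + C 1 : M[X]).rootSet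
          (AlgebraicClosure M)) =
      IntermediateField.adjoin M
        ((X ^ 4 - C (n ^ 2 + 16) * X ^ 2 + C (4 * (n ^ 2 + 16)) : M[X]).rootSet
          (AlgebraicClosure M)) :=
  simplest_quartic_splitting_field_general h2 n
end
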